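/- Over an algebraically closed field k of characteristic 3, if a homogeneous quartic f is divisible as f = x₄·(cubic) + (x₁x₂ - x₃²)·(quadric in x₁,x₂,x₃), and additionally every monomial of f either has some variable with exponent ≥ 3 or f is a multiple of x₄²(x₁x₂ - x₃²), then no such nonzero f defining a smooth surface exists; i.e., the coefficient constraints from the vanishing Hessian force a contradiction with smoothness along the conic. -/

import Mathlib

/-!
Since `x₄` does not occur in `g₂`, the coefficients of `f` at monomials free of `x₄` are those of
`(x₁x₂ - x₃²)·g₂`. The six such monomials of degree 4 with all exponents `≤ 2` therefore have
coefficient zero, and these six coefficients are, up to sign and a triangular change, the six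
coefficients of the ternary quadric `g₂`; so `g₂ = 0` and `f = x₄·g₃`. Over an algebraically closed
field the cubic `g₃` has a zero on the line `x₃ = x₄ = 0`, and every zero of `g₃` on the plane
`x₄ = 0` is a singular point of `x₄·g₃`.
-/

open MvPolynomial

namespace MvPolynomial

section CommRing

variable {σ R : Type*} [CommRing R]

lemma coeff_X_mul_eq_zero {m : σ →₀ ℕ} {j : σ} (hm : m j = 0) (p : MvPolynomial σ R) :
    coeff m (X j * p) = 0 := by
  classical
  simp [coeff_X_mul', hm]

def IsSingularPoint (f : MvPolynomial σ R) (x : σ → R) : Prop :=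
  eval x f = 0 ∧ ∀ i, eval x (pderiv i f) = 0

lemma isSingularPoint_X_mul {j : σ} {g : MvPolynomial σ R} {x : σ → R} (hxj : x j = 0)
    (hgx : eval x g = 0) : IsSingularPoint (X j * g) x := by
  classical
  refine ⟨by simp [hxj], fun i => ?_⟩
  rw [pderiv_mul, pderiv_X]
  by_cases hij : i = j
  · subst hij; simp [hxj, hgx]
  · simp [hxj, Pi.single_eq_of_ne' hij]

end CommRing

section IsAlgClosed

variable {k : Type*} [Field k] [IsAlgClosed k]

theorem IsHomogeneous.exists_ne_zero_eval_eq_zero_of_fin_two {h : MvPolynomial (Fin 2) k}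
    {n : ℕ} (hh : h.IsHomogeneous n) (hn : n ≠ 0) : ∃ y : Fin 2 → k, y ≠ 0 ∧ eval y h = 0 := by
  obtain ⟨p, hp⟩ : ∃ p : Polynomial k, MvPolynomial.aeval ![Polynomial.X, 1] h = p := ⟨_, rfl⟩
  by_cases hroot : ∃ z, p.IsRoot z
  · obtain ⟨z, hz⟩ := hroot
    refine ⟨![z, 1], fun h1 => by simpa using congrFun h1 1, ?_⟩
    have hpt : ![z, 1] = fun i => (![Polynomial.X, 1] i).eval z := by
      funext i; fin_cases i <;> simp
    simpa [hpt, hp, hz.eq_zero] using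
      (comp_aeval_apply ![Polynomial.X, 1] (Polynomial.aeval z) h).symm
  · -- a root-free polynomial is a constant `c`, and then `h = c·x₂ⁿ` vanishes at `[1 : 0]`
    have hdeg : p.degree = 0 := by
      by_contra hdeg
      exact hroot (IsAlgClosed.exists_root p hdeg)
    refine ⟨![1, 0], fun h1 => by simpa using congrFun h1 0, ?_⟩
    rw [← Polynomial.homogenize_eq_of_isHomogeneous hh hp,
      Polynomial.eq_C_of_degree_eq_zero hdeg, Polynomial.homogenize_C]
    simp [hn]

theorem IsHomogeneous.exists_ne_zero_eval_eq_zero {σ : Type*} {g : MvPolynomial σ k} {n : ℕ}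
    (hg : g.IsHomogeneous n) (hn : n ≠ 0) {i j : σ} (hij : i ≠ j) :
    ∃ x : σ → k, x ≠ 0 ∧ (∀ l, l ≠ i → l ≠ j → x l = 0) ∧ eval x g = 0 := by
  classical
  set v : σ → MvPolynomial (Fin 2) k := Pi.single i (X 0) + Pi.single j (X 1)
  have hv : ∀ l, (v l).IsHomogeneous 1 := by
    intro l
    by_cases hi : l = i
    · subst hi; simpa [v, hij] using isHomogeneous_X k 0
    · by_cases hj : l = j
      · subst hj; simpa [v, hi] using isHomogeneous_X k 1
      · simpa [v, hi, hj] using isHomogeneous_zero _ _ 1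
  obtain ⟨y, hy, hgy⟩ :=
    exists_ne_zero_eval_eq_zero_of_fin_two (hg.aeval v hv) (by simpa using hn)
  refine ⟨fun l => eval y (v l), fun hx => hy ?_, fun l hi hj => by simp [v, hi, hj], ?_⟩
  · ext a; fin_cases a
    · simpa [v, hij] using congrFun hx i
    · simpa [v, hij.symm] using congrFun hx j
  · rw [← hgy]
    simpa using (comp_aeval_apply v (MvPolynomial.aeval y) g).symm

end IsAlgClosed

end MvPolynomial

noncomputable def exponents (a b c d : ℕ) : Fin 4 →₀ ℕ :=
  Finsupp.equivFunOnFinite.symm ![a, b, c, d]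

@[simp]
lemma exponents_apply (a b c d : ℕ) (i : Fin 4) : exponents a b c d i = ![a, b, c, d] i := rfl

lemma eq_exponents (m : Fin 4 →₀ ℕ) : m = exponents (m 0) (m 1) (m 2) (m 3) := by
  ext i; fin_cases i <;> rfl

lemma exponents_le_exponents_iff {a b c d a' b' c' d' : ℕ} :
    exponents a b c d ≤ exponents a' b' c' d' ↔ a ≤ a' ∧ b ≤ b' ∧ c ≤ c' ∧ d ≤ d' := by
  simp [Finsupp.le_def, Fin.forall_fin_succ]

lemma exponents_sub_exponents (a b c d a' b' c' d' : ℕ) :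
    exponents a b c d - exponents a' b' c' d' =
      exponents (a - a') (b - b') (c - c') (d - d') := by
  ext i; fin_cases i <;> rfl

section Conic

variable {R : Type*} [CommRing R]

lemma coeff_exponents_conic_mul (g : MvPolynomial (Fin 4) R) (a b c d : ℕ) :
    coeff (exponents a b c d) ((X 0 * X 1 - X 2 ^ 2) * g) =
      (if 1 ≤ a ∧ 1 ≤ b then coeff (exponents (a - 1) (b - 1) c d) g else 0)
        - if 2 ≤ c then coeff (exponents a b (c - 2) d) g else 0 := by
  have h01 : (X 0 * X 1 : MvPolynomial (Fin 4) R) = monomial (exponents 1 1 0 0) 1 := by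
    rw [X, X, monomial_mul, one_mul,
      show Finsupp.single 0 1 + Finsupp.single 1 1 = exponents 1 1 0 0 by
        ext i; fin_cases i <;> simp]
  have h22 : (X 2 ^ 2 : MvPolynomial (Fin 4) R) = monomial (exponents 0 0 2 0) 1 := by
    rw [X_pow_eq_monomial, show Finsupp.single 2 2 = exponents 0 0 2 0 by
      ext i; fin_cases i <;> simp]
  rw [h01, h22, sub_mul, coeff_sub, coeff_monomial_mul', coeff_monomial_mul']
  simp [exponents_le_exponents_iff, exponents_sub_exponents]

lemma eq_zero_of_coeff_conic_mul_eq_zero {g : MvPolynomial (Fin 4) R}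
    (hg : g.IsHomogeneous 2) (hg3 : ∀ m ∈ g.support, m 3 = 0)
    (h : ∀ a b c, a ≤ 2 → b ≤ 2 → c ≤ 2 →
      coeff (exponents a b c 0) ((X 0 * X 1 - X 2 ^ 2) * g) = 0) :
    g = 0 := by
  have h110 : coeff (exponents 1 1 0 0) g = 0 := by
    simpa [coeff_exponents_conic_mul] using h 2 2 0
  have h101 : coeff (exponents 1 0 1 0) g = 0 := by
    simpa [coeff_exponents_conic_mul] using h 2 1 1
  have h011 : coeff (exponents 0 1 1 0) g = 0 := by
    simpa [coeff_exponents_conic_mul] using h 1 2 1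
  have h200 : coeff (exponents 2 0 0 0) g = 0 := by
    simpa [coeff_exponents_conic_mul] using h 2 0 2
  have h020 : coeff (exponents 0 2 0 0) g = 0 := by
    simpa [coeff_exponents_conic_mul] using h 0 2 2
  have h002 : coeff (exponents 0 0 2 0) g = 0 := by
    simpa [coeff_exponents_conic_mul, h110] using h 1 1 2
  ext m
  rw [coeff_zero]
  by_contra hm
  have hm3 := hg3 m (mem_support_iff.mpr hm)
  have hdeg : m 0 + m 1 + m 2 + m 3 = 2 := by
    rw [← Fin.sum_univ_four, ← Finsupp.degree_eq_sum, Finsupp.degree_eq_weight_one]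
    exact hg hm
  rw [eq_exponents m, hm3] at hm
  obtain ⟨h0, h1, h2⟩ | ⟨h0, h1, h2⟩ | ⟨h0, h1, h2⟩ | ⟨h0, h1, h2⟩ | ⟨h0, h1, h2⟩ | ⟨h0, h1, h2⟩ :
      (m 0 = 1 ∧ m 1 = 1 ∧ m 2 = 0) ∨ (m 0 = 1 ∧ m 1 = 0 ∧ m 2 = 1) ∨
      (m 0 = 0 ∧ m 1 = 1 ∧ m 2 = 1) ∨ (m 0 = 2 ∧ m 1 = 0 ∧ m 2 = 0) ∨
      (m 0 = 0 ∧ m 1 = 2 ∧ m 2 = 0) ∨ (m 0 = 0 ∧ m 1 = 0 ∧ m 2 = 2) := by omega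
  all_goals rw [h0, h1, h2] at hm; contradiction

end Conic

theorem stmt_11_general {k : Type*} [Field k] [IsAlgClosed k]
    (f g3 g2 : MvPolynomial (Fin 4) k)
    (hg3 : g3.IsHomogeneous 3) (hg2 : g2.IsHomogeneous 2)
    (hg2vars : ∀ m ∈ g2.support, m 3 = 0)
    (hshape : f = X 3 * g3 + (X 0 * X 1 - X 2 ^ 2) * g2)
    (hsupp : ∃ c : k, ∀ m ∈ (f - c • (X 3 ^ 2 * (X 0 * X 1 - X 2 ^ 2))).support,
      ∃ i, 3 ≤ m i)
    (hsmooth : ∀ x : Fin 4 → k, x ≠ 0 →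
      ¬(eval x f = 0 ∧ ∀ i, eval x (pderiv i f) = 0)) :
    False := by
  obtain ⟨c, hc⟩ := hsupp
  have hg2_eq : g2 = 0 := by
    refine eq_zero_of_coeff_conic_mul_eq_zero hg2 hg2vars fun a b d ha hb hd => ?_
    have hm : coeff (exponents a b d 0) (f - c • (X 3 ^ 2 * (X 0 * X 1 - X 2 ^ 2))) = 0 := by
      refine notMem_support_iff.mp fun hmem => ?_
      obtain ⟨i, hi⟩ := hc _ hmem
      fin_cases i <;> simp at hi <;> omega
    have h3 : exponents a b d 0 3 = 0 := rfl
    simpa [hshape, pow_two, mul_assoc, coeff_X_mul_eq_zero h3] using hm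
  obtain ⟨x, hx0, hx, hgx⟩ := hg3.exists_ne_zero_eval_eq_zero three_ne_zero zero_ne_one
  have hf : f = X 3 * g3 := by rw [hshape, hg2_eq, mul_zero, add_zero]
  exact hsmooth x hx0 (hf ▸ isSingularPoint_X_mul (hx 3 (by decide) (by decide)) hgx)

/-- Degeneration argument from Proposition 2.2 in characteristic 3: suppose the
homogeneous quartic `f = x₄·g₃ + (x₁x₂ - x₃²)·g₂` (with `g₂` a quadric in
`x₁, x₂, x₃` only), and moreover — as forced by the identical vanishing of the
Hessian quadratic form along the conic — `f` is, up to a multiple of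
`x₄²(x₁x₂ - x₃²)`, supported on monomials having some variable with exponent `≥ 3`.
Then `f` cannot define a smooth surface: the smoothness condition yields a
contradiction. (Variables are indexed `0,…,3`, so `X 0 = x₁, …, X 3 = x₄`.) -/
theorem stmt_11 {k : Type*} [Field k] [IsAlgClosed k] [CharP k 3]
    (f g3 g2 : MvPolynomial (Fin 4) k)
    (hf4 : f.IsHomogeneous 4) (hg3 : g3.IsHomogeneous 3) (hg2 : g2.IsHomogeneous 2)
    (hg2vars : ∀ m ∈ g2.support, m 3 = 0)
    (hshape : f = X 3 * g3 + (X 0 * X 1 - X 2 ^ 2) * g2)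
    (hsupp : ∃ c : k, ∀ m ∈ (f - c • (X 3 ^ 2 * (X 0 * X 1 - X 2 ^ 2))).support,
      ∃ i, 3 ≤ m i)
    (hsmooth : ∀ x : Fin 4 → k, x ≠ 0 →
      ¬(eval x f = 0 ∧ ∀ i, eval x (pderiv i f) = 0)) :
    False :=
  stmt_11_general f g3 g2 hg3 hg2 hg2vars hshape hsupp hsmooth
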